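/- The measure ν on I = [0,1] ∪ {∞} defined by ν((t,1] ∪ {∞}) = min(1, 1/(2t)) for t ∈ (0,1] (and ν(I)=1) solves the recursive distributional equation X ≐ γ[τ](X₁,X₂), where τ is uniform on [0,1], X₁,X₂ are independent copies of X independent of τ, and γ[t](x,y) = x∧y if x∧y > t, and = ∞ otherwise. -/

import Mathlib

open MeasureTheory Set
open scoped ENNReal

/-!
Write `G(t) = ν((t, ∞])`. For finite `a`, the event `γ[t](X₁, X₂) ≤ a` is
`{X₁ ∧ X₂ > t} \ {X₁ ∧ X₂ > max t a}`, of probability `G(t)² - G(max t a)²`. Integrating over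
`t ∈ [0, 1]` gives `1 - G(a) = ν([0, a])`, because `t G(t)² - G(t) + 1` is the primitive of `G²`
vanishing at `0` on `(-∞, 1]`.
-/

/-- The map γ[t](x,y) on I = [0,1] ∪ {∞}, encoded in ℝ≥0∞:
γ[t](x,y) = min x y if min x y > t, else ∞. -/
noncomputable def gammaMap (t : ℝ) (x y : ℝ≥0∞) : ℝ≥0∞ :=
  if ENNReal.ofReal t < min x y then min x y else ⊤

/-- The tail `t ↦ ν((t, ∞])`: equal to `1` for `t ≤ 1/2`, to `1/(2t)` on `[1/2, 1]` and to `1/2`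
for `t ≥ 1`. -/
noncomputable def nuTail (r : ℝ) : ℝ := (2 * max (1 / 2) (min r 1))⁻¹

lemma nuTail_of_le_half {r : ℝ} (hr : r ≤ 1 / 2) : nuTail r = 1 := by
  rw [nuTail, min_eq_left (by linarith), max_eq_left hr]; norm_num

lemma nuTail_of_mem_Icc {r : ℝ} (hr : r ∈ Icc (1 / 2 : ℝ) 1) : nuTail r = (2 * r)⁻¹ := by
  rw [nuTail, min_eq_left hr.2, max_eq_right hr.1]

lemma nuTail_of_one_le {r : ℝ} (hr : 1 ≤ r) : nuTail r = 1 / 2 := by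
  rw [nuTail, min_eq_right hr, max_eq_right (by norm_num)]; norm_num

lemma nuTail_min_one (r : ℝ) : nuTail (min r 1) = nuTail r := by
  rw [nuTail, nuTail, min_assoc, min_self]

lemma nuTail_nonneg (r : ℝ) : 0 ≤ nuTail r := by
  unfold nuTail; positivity

lemma antitone_nuTail : Antitone nuTail := fun _ _ h => by
  unfold nuTail
  gcongr

lemma continuous_nuTail : Continuous nuTail :=
  (continuous_const.mul (continuous_const.max (continuous_id.min continuous_const))).inv₀
    fun _ => (mul_pos two_pos (lt_max_of_lt_left one_half_pos)).ne'

lemma intervalIntegrable_nuTail_sq (a b : ℝ) :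
    IntervalIntegrable (fun t => nuTail t ^ 2) volume a b :=
  (continuous_nuTail.pow 2).intervalIntegrable a b

lemma continuous_nuTail_sq_sub_sq (s : ℝ) :
    Continuous fun t => nuTail t ^ 2 - nuTail (max t s) ^ 2 :=
  (continuous_nuTail.pow 2).sub
    ((continuous_nuTail.comp (continuous_id.max continuous_const)).pow 2)

lemma integral_nuTail_sq {x : ℝ} (hx : x ≤ 1) :
    ∫ t in (0 : ℝ)..x, nuTail t ^ 2 = x * nuTail x ^ 2 - nuTail x + 1 := by
  have hconst : ∀ y ≤ 1 / 2, ∫ t in (0 : ℝ)..y, nuTail t ^ 2 = y := fun y hy => by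
    rw [intervalIntegral.integral_congr (g := fun _ => 1) fun t ht => by
      rw [nuTail_of_le_half (ht.2.trans (max_le (by norm_num) hy)), one_pow]]
    simp
  rcases le_or_gt x (1 / 2) with hx' | hx'
  · rw [hconst x hx', nuTail_of_le_half hx']; ring
  have hderiv : ∀ t ∈ uIcc (1 / 2 : ℝ) x,
      HasDerivAt (fun t => -(1 / 4) * t⁻¹) (nuTail t ^ 2) t := by
    intro t ht
    rw [uIcc_of_le hx'.le] at ht
    have ht0 : t ≠ 0 := by linarith [ht.1]
    rw [nuTail_of_mem_Icc ⟨ht.1, ht.2.trans hx⟩]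
    exact ((hasDerivAt_inv ht0).const_mul _).congr_deriv (by field_simp; ring)
  rw [← intervalIntegral.integral_add_adjacent_intervals (intervalIntegrable_nuTail_sq 0 (1 / 2))
      (intervalIntegrable_nuTail_sq _ x), hconst _ le_rfl,
    intervalIntegral.integral_eq_sub_of_hasDerivAt hderiv (intervalIntegrable_nuTail_sq _ x),
    nuTail_of_mem_Icc ⟨hx'.le, hx⟩]
  field_simp
  ring

lemma integral_nuTail_sq_sub_sq {s : ℝ} (hs : 0 ≤ s) :
    ∫ t in (0 : ℝ)..1, (nuTail t ^ 2 - nuTail (max t s) ^ 2) = 1 - nuTail s := by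
  set m := min s 1 with hm
  have hint := (continuous_nuTail_sq_sub_sq s).intervalIntegrable (μ := volume)
  have hlow : ∫ t in (0 : ℝ)..m, (nuTail t ^ 2 - nuTail (max t s) ^ 2)
      = ∫ t in (0 : ℝ)..m, (nuTail t ^ 2 - nuTail s ^ 2) :=
    intervalIntegral.integral_congr fun t ht => by
      rw [uIcc_of_le (le_min hs zero_le_one)] at ht
      rw [max_eq_right (ht.2.trans (min_le_left _ _))]
  have hhigh : ∫ t in m..1, (nuTail t ^ 2 - nuTail (max t s) ^ 2) = 0 := by
    refine (intervalIntegral.integral_congr (g := fun _ => 0) fun t ht => ?_).trans (by simp)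
    rw [uIcc_of_le (min_le_right _ _)] at ht
    rcases le_or_gt s t with hst | hts
    · simp [max_eq_left hst]
    · have h1t : 1 ≤ t := (min_le_iff.1 ht.1).resolve_left (not_le.2 hts)
      rw [nuTail_of_one_le h1t, nuTail_of_one_le (h1t.trans (le_max_left _ _)), sub_self]
  rw [← intervalIntegral.integral_add_adjacent_intervals (hint 0 m) (hint m 1), hlow, hhigh,
    intervalIntegral.integral_sub (intervalIntegrable_nuTail_sq 0 m) intervalIntegrable_const,
    integral_nuTail_sq (min_le_right _ _), intervalIntegral.integral_const, hm, nuTail_min_one]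
  simp
  ring

lemma measurable_gammaMap :
    Measurable (fun p : ℝ × ℝ≥0∞ × ℝ≥0∞ => gammaMap p.1 p.2.1 p.2.2) := by
  unfold gammaMap
  have hmin : Measurable fun p : ℝ × ℝ≥0∞ × ℝ≥0∞ => min p.2.1 p.2.2 := by fun_prop
  exact Measurable.ite (measurableSet_lt (by fun_prop) hmin) hmin measurable_const

lemma gammaMap_le_iff {a : ℝ≥0∞} (ha : a ≠ ⊤) (t : ℝ) (x y : ℝ≥0∞) :
    gammaMap t x y ≤ a ↔ ENNReal.ofReal t < min x y ∧ min x y ≤ a := by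
  unfold gammaMap
  split_ifs with h <;> simp [h, ha]

lemma measure_prod_gammaMap_le {μ : Measure ℝ≥0∞} [IsFiniteMeasure μ] {a : ℝ≥0∞} (ha : a ≠ ⊤)
    (t : ℝ) :
    (μ.prod μ) {p | gammaMap t p.1 p.2 ≤ a}
      = μ (Ioi (ENNReal.ofReal t)) ^ 2 - μ (Ioi (max (ENNReal.ofReal t) a)) ^ 2 := by
  have hset : {p : ℝ≥0∞ × ℝ≥0∞ | gammaMap t p.1 p.2 ≤ a}
      = Ioi (ENNReal.ofReal t) ×ˢ Ioi (ENNReal.ofReal t)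
        \ Ioi (max (ENNReal.ofReal t) a) ×ˢ Ioi (max (ENNReal.ofReal t) a) := by
    ext p
    simp only [mem_ofPred_eq, gammaMap_le_iff ha, mem_sdiff, mem_prod, mem_Ioi, lt_min_iff,
      max_lt_iff, min_le_iff]
    grind
  have hsub := Ioi_subset_Ioi (le_max_left (ENNReal.ofReal t) a)
  rw [hset, measure_sdiff (prod_mono hsub hsub)
    (measurableSet_Ioi.prod measurableSet_Ioi).nullMeasurableSet (measure_ne_top _ _),
    Measure.prod_prod, Measure.prod_prod, sq, sq]

lemma lintegral_nuTail_sq_sub_sq {s : ℝ} (hs : 0 ≤ s) :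
    ∫⁻ t in Icc (0 : ℝ) 1, (ENNReal.ofReal (nuTail t) ^ 2 - ENNReal.ofReal (nuTail (max t s)) ^ 2)
      = 1 - ENNReal.ofReal (nuTail s) := by
  have hnonneg : ∀ t, 0 ≤ nuTail t ^ 2 - nuTail (max t s) ^ 2 := fun t => by
    have := antitone_nuTail (le_max_left t s)
    nlinarith [nuTail_nonneg (max t s)]
  rw [← ENNReal.ofReal_one, ← ENNReal.ofReal_sub _ (nuTail_nonneg s),
    ← integral_nuTail_sq_sub_sq hs, intervalIntegral.integral_of_le zero_le_one,
    ← integral_Icc_eq_integral_Ioc, ofReal_integral_eq_lintegral_ofReal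
      (continuous_nuTail_sq_sub_sq s).integrableOn_Icc (ae_of_all _ hnonneg)]
  refine lintegral_congr fun t => ?_
  rw [ENNReal.ofReal_sub _ (sq_nonneg _), ENNReal.ofReal_pow (nuTail_nonneg _),
    ENNReal.ofReal_pow (nuTail_nonneg _)]

lemma measure_Ioi_ofReal_eq_measure_Ioc_union_top {ν : Measure ℝ≥0∞}
    (hconc : ν {x : ℝ≥0∞ | 1 < x ∧ x ≠ ⊤} = 0) {r : ℝ} :
    ν (Ioi (ENNReal.ofReal r)) = ν (Ioc (ENNReal.ofReal r) 1 ∪ {⊤}) := by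
  refine le_antisymm ?_ (measure_mono (union_subset Ioc_subset_Ioi_self
    (singleton_subset_iff.2 ENNReal.ofReal_lt_top)))
  calc ν (Ioi (ENNReal.ofReal r))
      ≤ ν ((Ioc (ENNReal.ofReal r) 1 ∪ {⊤}) ∪ {x : ℝ≥0∞ | 1 < x ∧ x ≠ ⊤}) :=
        measure_mono fun x hx => by
          simp only [mem_union, mem_Ioc, mem_singleton_iff, mem_ofPred_eq, mem_Ioi] at hx ⊢
          by_cases h1 : x ≤ 1 <;> by_cases h2 : x = ⊤ <;> simp_all
    _ ≤ ν (Ioc (ENNReal.ofReal r) 1 ∪ {⊤}) :=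
        (measure_union_le _ _).trans (by rw [hconc, add_zero])

lemma measure_Ioi_ofReal {ν : Measure ℝ≥0∞} [IsProbabilityMeasure ν]
    (hconc : ν {x : ℝ≥0∞ | 1 < x ∧ x ≠ ⊤} = 0)
    (hcdf : ∀ t : ℝ, t ∈ Set.Ioc (0:ℝ) 1 →
      ν (Set.Ioc (ENNReal.ofReal t) 1 ∪ {⊤}) = ENNReal.ofReal (min 1 (1/(2*t))))
    (r : ℝ) : ν (Ioi (ENNReal.ofReal r)) = ENNReal.ofReal (nuTail r) := by
  have hmid : ∀ r ∈ Icc (1 / 2 : ℝ) 1, ν (Ioi (ENNReal.ofReal r)) = ENNReal.ofReal (nuTail r) :=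
    fun r hr => by
      rw [measure_Ioi_ofReal_eq_measure_Ioc_union_top hconc, hcdf r ⟨by linarith [hr.1], hr.2⟩,
        nuTail_of_mem_Icc hr, min_eq_right, one_div]
      rw [div_le_one] <;> linarith [hr.1]
  rcases le_or_gt r (1 / 2) with hr | hr
  · refine le_antisymm ?_ ?_
    · rw [nuTail_of_le_half hr, ENNReal.ofReal_one]
      exact prob_le_one
    · rw [nuTail_of_le_half hr, ← nuTail_of_le_half le_rfl, ← hmid _ (by norm_num)]
      exact measure_mono (Ioi_subset_Ioi (ENNReal.ofReal_le_ofReal hr))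
  rcases le_or_gt r 1 with hr' | hr'
  · exact hmid r ⟨hr.le, hr'⟩
  refine le_antisymm ?_ ?_
  · rw [nuTail_of_one_le hr'.le, ← nuTail_of_one_le le_rfl, ← hmid 1 (by norm_num)]
    exact measure_mono (Ioi_subset_Ioi (ENNReal.ofReal_le_ofReal hr'.le))
  · calc ENNReal.ofReal (nuTail r) = ν (Ioc (ENNReal.ofReal 1) 1 ∪ {⊤}) := by
          rw [hcdf 1 (by norm_num), nuTail_of_one_le hr'.le]; norm_num
      _ ≤ ν (Ioi (ENNReal.ofReal r)) := measure_mono (by simp)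

theorem stmt0 (ν : Measure ℝ≥0∞) [IsProbabilityMeasure ν]
    (hconc : ν {x : ℝ≥0∞ | 1 < x ∧ x ≠ ⊤} = 0)
    (hcdf : ∀ t : ℝ, t ∈ Set.Ioc (0:ℝ) 1 →
      ν (Set.Ioc (ENNReal.ofReal t) 1 ∪ {⊤}) = ENNReal.ofReal (min 1 (1/(2*t)))) :
    Measure.map (fun p : ℝ × ℝ≥0∞ × ℝ≥0∞ => gammaMap p.1 p.2.1 p.2.2)
      ((volume.restrict (Set.Icc (0:ℝ) 1)).prod (ν.prod ν)) = ν := by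
  refine (Measure.ext_of_Iic ν _ fun a => ?_).symm
  rw [Measure.map_apply measurable_gammaMap measurableSet_Iic]
  rcases eq_or_ne a ⊤ with rfl | ha
  · simp [← univ_prod_univ, Measure.prod_prod]
  obtain ⟨s, hs, rfl⟩ : ∃ s : ℝ, 0 ≤ s ∧ a = ENNReal.ofReal s :=
    ⟨a.toReal, ENNReal.toReal_nonneg, (ENNReal.ofReal_toReal ha).symm⟩
  have hIic : ν (Iic (ENNReal.ofReal s)) = 1 - ENNReal.ofReal (nuTail s) := by
    rw [← compl_Ioi, prob_compl_eq_one_sub measurableSet_Ioi, measure_Ioi_ofReal hconc hcdf]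
  rw [Measure.prod_apply (measurable_gammaMap measurableSet_Iic), hIic,
    ← lintegral_nuTail_sq_sub_sq hs]
  refine (lintegral_congr fun t => ?_).symm
  change (ν.prod ν) {p | gammaMap t p.1 p.2 ≤ ENNReal.ofReal s} = _
  rw [measure_prod_gammaMap_le ENNReal.ofReal_ne_top, ← ENNReal.ofReal_max,
    measure_Ioi_ofReal hconc hcdf, measure_Ioi_ofReal hconc hcdf]
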